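/- arXiv:1908.06570 — 2 statements merged into one kernel-verified Lean document; each statement's English description precedes it below -/
import Mathlib

section
/- Suppose there exists a t-(v,k,1)-design with k/2 + 1 < t ≤ k, and let t1, t2 be positive integers with max{t1, t2} < t and t1 + t2 = k. Then there exists a (K,F,Q,S) placement delivery array with K = b, F = C(v,t1), Q = C(v,t1) − C(k,t1), and S = C(v,t2), where b = C(v,t)/C(k,t). -/
open Finset

/-- A `(K, F, Q, S)` placement delivery array: an `F × K` array with entries in
`[S] ∪ {*}` (where `none` plays the role of `*`) satisfying conditions C1, C2, C3. -/
def IsPDA {K F S : ℕ} (Q : ℕ) (P : Fin F → Fin K → Option (Fin S)) : Prop :=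
  -- C1: the symbol `*` appears exactly `Q` times in each column
  (∀ k : Fin K, (univ.filter fun j : Fin F => P j k = none).card = Q) ∧
  -- C2: each integer `s ∈ [S]` occurs at least once in the array
  (∀ s : Fin S, ∃ j k, P j k = some s) ∧
  -- C3
  (∀ (j₁ j₂ : Fin F) (k₁ k₂ : Fin K) (s : Fin S), (j₁, k₁) ≠ (j₂, k₂) →
    P j₁ k₁ = some s → P j₂ k₂ = some s →
    j₁ ≠ j₂ ∧ k₁ ≠ k₂ ∧ P j₁ k₂ = none ∧ P j₂ k₁ = none)

/-- There exists a `(K, F, Q, S)` placement delivery array. -/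
def ExistsPDA (K F Q S : ℕ) : Prop :=
  ∃ P : Fin F → Fin K → Option (Fin S), IsPDA Q P

/-- A `t`-`(v,k,1)` design (Steiner system `S(t,k,v)`): `V` is a `v`-set, each block
is a `k`-subset of `V`, and every `t`-subset of `V` lies in exactly one block. -/
def IsSteinerSystem {V : Type} [Fintype V] [DecidableEq V] (B : Finset (Finset V))
    (t v k : ℕ) : Prop :=
  Fintype.card V = v ∧ (∀ blk ∈ B, blk.card = k) ∧
  (∀ T : Finset V, T.card = t → (B.filter fun blk => T ⊆ blk).card = 1)

/-!
Columns are the blocks, rows the `t1`-subsets and symbols the `t2`-subsets of the point set; the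
entry in row `T` and column `blk` is `blk \ T` when `T ⊆ blk`, and `*` otherwise. A column has
`*` exactly outside the `C(k, t1)` subsets of its block. Every `t2`-set extends to a `t`-set and
so lies in a block, which makes every symbol occur. If the symbol `c` sits at `(T₁, blk₁)` and
`(T₂, blk₂)`, then `blk₁ = T₁ ∪ c`; so `T₁ ⊆ blk₂` would force `blk₁ ⊆ blk₂`, hence (blocks
having equal size) `blk₁ = blk₂` and `T₁ = T₂`. This gives condition C3.
-/

def IsIndexedPDA {α β γ : Type} [Fintype α] [DecidableEq γ] (Q : ℕ)
    (P : α → β → Option γ) : Prop :=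
  (∀ b : β, #{a | P a b = none} = Q) ∧
  (∀ c : γ, ∃ a b, P a b = some c) ∧
  (∀ (a₁ a₂ : α) (b₁ b₂ : β) (c : γ), (a₁, b₁) ≠ (a₂, b₂) →
    P a₁ b₁ = some c → P a₂ b₂ = some c →
    a₁ ≠ a₂ ∧ b₁ ≠ b₂ ∧ P a₁ b₂ = none ∧ P a₂ b₁ = none)

theorem IsIndexedPDA.existsPDA {α β γ : Type} [Fintype α] [Fintype β] [Fintype γ]
    [DecidableEq γ] {Q : ℕ} {P : α → β → Option γ} (hP : IsIndexedPDA Q P) :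
    ExistsPDA (Fintype.card β) (Fintype.card α) Q (Fintype.card γ) := by
  obtain ⟨hstar, hsymb, hpair⟩ := hP
  let eF := (Fintype.equivFin α).symm
  let eK := (Fintype.equivFin β).symm
  let eS := Fintype.equivFin γ
  refine ⟨fun j k => (P (eF j) (eK k)).map eS, fun k => ?_, fun s => ?_, ?_⟩
  · rw [← hstar (eK k), ← card_map eF.toEmbedding]
    congr 1
    ext a
    simp
  · obtain ⟨a, b, hab⟩ := hsymb (eS.symm s)
    exact ⟨eF.symm a, eK.symm b, by simp [eF, eK, hab]⟩
  · intro j₁ j₂ k₁ k₂ s hne h₁ h₂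
    simp only [Option.map_eq_some_iff, ← Equiv.eq_symm_apply, exists_eq_right] at h₁ h₂
    have hne' : (eF j₁, eK k₁) ≠ (eF j₂, eK k₂) := by
      simpa [Prod.ext_iff, eF.injective.eq_iff, eK.injective.eq_iff] using hne
    obtain ⟨hj, hk, h₁₂, h₂₁⟩ := hpair _ _ _ _ _ hne' h₁ h₂
    exact ⟨fun h => hj (h ▸ rfl), fun h => hk (h ▸ rfl), by simp [h₁₂],
      by simp [h₂₁]⟩

namespace IsSteinerSystem

variable {V : Type} [Fintype V] [DecidableEq V] {B : Finset (Finset V)} {t v k : ℕ}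

theorem card_mul_choose (hB : IsSteinerSystem B t v k) : #B * k.choose t = v.choose t := by
  obtain ⟨hV, hblk, hunique⟩ := hB
  calc #B * k.choose t = ∑ blk ∈ B, #{T ∈ powersetCard t univ | T ⊆ blk} := by
        rw [sum_const_nat fun blk hblk' => ?_]
        rw [← hblk blk hblk', ← card_powersetCard]
        congr 1
        ext T
        simp [mem_powersetCard, and_comm]
    _ = ∑ T ∈ powersetCard t univ, #{blk ∈ B | T ⊆ blk} := by
        simp only [card_filter]
        exact sum_comm
    _ = v.choose t := by
        rw [sum_congr rfl fun T hT => hunique T (mem_powersetCard_univ.mp hT),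
          sum_const, smul_eq_mul, mul_one, card_powersetCard, card_univ, hV]

theorem card_eq_choose_div (hB : IsSteinerSystem B t v k) (htk : t ≤ k) :
    #B = v.choose t / k.choose t :=
  (Nat.div_eq_of_eq_mul_left (Nat.choose_pos htk) hB.card_mul_choose.symm).symm

theorem exists_superset (hB : IsSteinerSystem B t v k) (htv : t ≤ v) {s : Finset V}
    (hs : #s ≤ t) : ∃ blk ∈ B, s ⊆ blk := by
  obtain ⟨hV, -, hunique⟩ := hB
  obtain ⟨T, hsT, -, hT⟩ := exists_subsuperset_card_eq (subset_univ s) hs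
    (by rwa [card_univ, hV])
  obtain ⟨blk, hblk⟩ := card_eq_one.mp (hunique T hT)
  obtain ⟨hblkB, hTblk⟩ := mem_filter.mp (hblk ▸ mem_singleton_self blk)
  exact ⟨blk, hblkB, hsT.trans hTblk⟩

end IsSteinerSystem

section BlockComplement

variable {V : Type} [DecidableEq V]

def blockComplementArray (B : Finset (Finset V)) (m n : ℕ) (hB : ∀ blk ∈ B, #blk = m + n)
    (T : {T : Finset V // #T = m}) (blk : B) : Option {c : Finset V // #c = n} :=
  if h : T.1 ⊆ blk.1 then
    some ⟨blk.1 \ T.1, by rw [card_sdiff_of_subset h, hB _ blk.2, T.2, Nat.add_sub_cancel_left]⟩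
  else none

variable {B : Finset (Finset V)} {m n : ℕ} {hB : ∀ blk ∈ B, #blk = m + n}

theorem blockComplementArray_eq_none_iff {T : {T : Finset V // #T = m}} {blk : B} :
    blockComplementArray B m n hB T blk = none ↔ ¬ T.1 ⊆ blk.1 := by
  unfold blockComplementArray
  split_ifs with h <;> simp [h]

theorem blockComplementArray_eq_some_iff {T : {T : Finset V // #T = m}} {blk : B}
    {c : {c : Finset V // #c = n}} :
    blockComplementArray B m n hB T blk = some c ↔ T.1 ⊆ blk.1 ∧ blk.1 \ T.1 = c.1 := by
  unfold blockComplementArray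
  split_ifs with h <;> simp [h, Subtype.ext_iff]

theorem blockComplementArray_eq_of_subset {T₁ T₂ : {T : Finset V // #T = m}} {blk₁ blk₂ : B}
    {c : {c : Finset V // #c = n}}
    (h₁ : blockComplementArray B m n hB T₁ blk₁ = some c)
    (h₂ : blockComplementArray B m n hB T₂ blk₂ = some c) (hsub : T₁.1 ⊆ blk₂.1) :
    T₁ = T₂ ∧ blk₁ = blk₂ := by
  obtain ⟨hT₁, hc₁⟩ := blockComplementArray_eq_some_iff.mp h₁
  obtain ⟨hT₂, hc₂⟩ := blockComplementArray_eq_some_iff.mp h₂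
  have hblk₁ : blk₁.1 = T₁.1 ∪ c.1 := by rw [← hc₁, union_sdiff_of_subset hT₁]
  have hblk : blk₁ = blk₂ := by
    refine Subtype.ext (eq_of_subset_of_card_le ?_ ?_)
    · rw [hblk₁, ← hc₂]
      exact union_subset hsub sdiff_subset
    · rw [hB _ blk₁.2, hB _ blk₂.2]
  refine ⟨Subtype.ext ?_, hblk⟩
  rw [← Finset.sdiff_sdiff_eq_self hT₁, ← Finset.sdiff_sdiff_eq_self hT₂, hc₁, hc₂,
    hblk]

theorem isIndexedPDA_blockComplementArray [Fintype V]
    (hcover : ∀ c : Finset V, #c = n → ∃ blk ∈ B, c ⊆ blk) :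
    IsIndexedPDA ((Fintype.card V).choose m - (m + n).choose m)
      (blockComplementArray B m n hB) := by
  refine ⟨fun blk => ?_, fun c => ?_, ?_⟩
  · have hinside : #{T : {T : Finset V // #T = m} | T.1 ⊆ blk.1} = (m + n).choose m := by
      rw [← hB _ blk.2, ← card_powersetCard, ← card_map (Function.Embedding.subtype _)]
      congr 1
      ext T
      simp [mem_powersetCard, and_comm]
    simp only [blockComplementArray_eq_none_iff]
    rw [filter_not, card_sdiff_of_subset (filter_subset _ _), hinside, card_univ,
      Fintype.card_finset_len]
  · obtain ⟨blk, hblkB, hcblk⟩ := hcover c.1 c.2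
    refine ⟨⟨blk \ c.1, ?_⟩, ⟨blk, hblkB⟩, ?_⟩
    · rw [card_sdiff_of_subset hcblk, hB _ hblkB, c.2, Nat.add_sub_cancel]
    · exact blockComplementArray_eq_some_iff.mpr
        ⟨sdiff_subset, Finset.sdiff_sdiff_eq_self hcblk⟩
  · intro T₁ T₂ blk₁ blk₂ c hne h₁ h₂
    have h₁₂ : ¬ T₁.1 ⊆ blk₂.1 := fun hsub => by
      obtain ⟨rfl, rfl⟩ := blockComplementArray_eq_of_subset h₁ h₂ hsub
      exact hne rfl
    have h₂₁ : ¬ T₂.1 ⊆ blk₁.1 := fun hsub => by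
      obtain ⟨rfl, rfl⟩ := blockComplementArray_eq_of_subset h₂ h₁ hsub
      exact hne rfl
    refine ⟨?_, ?_, blockComplementArray_eq_none_iff.mpr h₁₂,
      blockComplementArray_eq_none_iff.mpr h₂₁⟩
    · rintro rfl
      exact h₁₂ (blockComplementArray_eq_some_iff.mp h₂).1
    · rintro rfl
      exact h₂₁ (blockComplementArray_eq_some_iff.mp h₂).1

end BlockComplement

theorem exists_pda_of_steiner_large_t_three_general {V : Type} [Fintype V] [DecidableEq V]
    (B : Finset (Finset V)) (t v k t1 t2 : ℕ) (htk : t ≤ k) (hkv : k < v)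
    (hdes : IsSteinerSystem B t v k)
    (hmax : max t1 t2 < t) (hsum : t1 + t2 = k) :
    ExistsPDA (Nat.choose v t / Nat.choose k t) (Nat.choose v t1)
      (Nat.choose v t1 - Nat.choose k t1) (Nat.choose v t2) := by
  have hB : ∀ blk ∈ B, #blk = t1 + t2 := hsum ▸ hdes.2.1
  have hcover : ∀ c : Finset V, #c = t2 → ∃ blk ∈ B, c ⊆ blk := fun c hc =>
    hdes.exists_superset (by omega) (by omega)
  have hPDA := (isIndexedPDA_blockComplementArray (hB := hB) hcover).existsPDA
  have hV : Fintype.card V = v := hdes.1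
  rwa [Fintype.card_coe, hdes.card_eq_choose_div htk, Fintype.card_finset_len,
    Fintype.card_finset_len, hsum, hV] at hPDA

/-- Steiner-system construction (`k/2 + 1 < t ≤ k`), parameter set 3: a `t`-`(v,k,1)`
design with `k/2 + 1 < t ≤ k`, and positive `t1, t2` with `max{t1,t2} < t` and
`t1 + t2 = k`, yields a PDA with `K = b = C(v,t)/C(k,t)`, `F = C(v,t1)`,
`Q = C(v,t1) - C(k,t1)`, `S = C(v,t2)`. -/
theorem exists_pda_of_steiner_large_t_three {V : Type} [Fintype V] [DecidableEq V]
    (B : Finset (Finset V)) (t v k t1 t2 : ℕ) (ht : 0 < t) (htk : t ≤ k) (hkv : k < v)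
    (hdes : IsSteinerSystem B t v k)
    (ht2 : k + 2 < 2 * t) (ht1pos : 0 < t1) (ht2pos : 0 < t2)
    (hmax : max t1 t2 < t) (hsum : t1 + t2 = k) :
    ExistsPDA (Nat.choose v t / Nat.choose k t) (Nat.choose v t1)
      (Nat.choose v t1 - Nat.choose k t1) (Nat.choose v t2) :=
  exists_pda_of_steiner_large_t_three_general B t v k t1 t2 htk hkv hdes hmax hsum
end

section
/- Suppose there exists a t-(v,k,λ)-design with λ ≥ 1, and let t0, t1, t2 be positive integers with t0 = t1 + t2 ≤ t. Then there exists a (K,F,Q,S) placement delivery array with K = C(v,t1)·λ_{t1}, F = C(v,t0)·λ_{t0}, Q = C(v,t0)·λ_{t0} − C(k−t1, t2), and S = C(v,t2)·λ_{t2}, where λ_s = λ·C(v−s, t−s)/C(k−s, t−s) for 0 ≤ s ≤ t. -/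
open Finset

/-- A `t`-`(v,k,λ)` design: `V` is a `v`-set, `B` a collection (multiset) of
`k`-subsets of `V`, such that every `t`-subset of `V` lies in exactly `λ` blocks. -/
def IsTDesign {V : Type} [Fintype V] [DecidableEq V] (B : Multiset (Finset V))
    (t v k lam : ℕ) : Prop :=
  Fintype.card V = v ∧ (∀ blk ∈ B, blk.card = k) ∧
  (∀ T : Finset V, T.card = t → (B.filter fun blk => T ⊆ blk).card = lam)

/-- `λ_s = λ · C(v-s, t-s) / C(k-s, t-s)`, the number of blocks of a
`t`-`(v,k,λ)` design containing a fixed `s`-subset (`0 ≤ s ≤ t`). -/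
def designLambda (lam v k t s : ℕ) : ℕ :=
  lam * Nat.choose (v - s) (t - s) / Nat.choose (k - s) (t - s)

lemma card_filter_superset {V : Type} [DecidableEq V] (A T : Finset V) (m : ℕ)
    (hTA : T ⊆ A) (hm : T.card ≤ m) :
    ((A.powersetCard m).filter fun X => T ⊆ X).card =
      Nat.choose (A.card - T.card) (m - T.card) := by
  rw [← card_sdiff_of_subset hTA, ← card_powersetCard]
  apply Finset.card_bij' (fun X _ => X \ T) (fun Y _ => Y ∪ T)
  · intro X hX
    simp only [mem_filter, mem_powersetCard] at hX
    simp only [mem_powersetCard]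
    exact ⟨sdiff_subset_sdiff hX.1.1 le_rfl, by rw [card_sdiff_of_subset hX.2, hX.1.2]⟩
  · intro Y hY
    simp only [mem_powersetCard] at hY
    have hdisj : Disjoint Y T := (sdiff_disjoint.mono_left hY.1)
    simp only [mem_filter, mem_powersetCard]
    refine ⟨⟨union_subset (hY.1.trans sdiff_subset) hTA, ?_⟩, subset_union_right⟩
    rw [card_union_of_disjoint hdisj, hY.2, Nat.sub_add_cancel hm]
  · intro X hX
    simp only [mem_filter, mem_powersetCard] at hX
    exact sdiff_union_of_subset hX.2
  · intro Y hY
    simp only [mem_powersetCard] at hY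
    exact union_sdiff_cancel_right (sdiff_disjoint.mono_left hY.1)

lemma multiset_filter_card_eq_fin {α : Type*} (B : Multiset α) (p : α → Prop) [DecidablePred p] :
    (B.filter p).card = (Finset.univ.filter fun i : Fin B.toList.length => p (B.toList.get i)).card := by
  conv_lhs => rw [← Multiset.coe_toList B]
  rw [Multiset.filter_coe, Multiset.coe_card]
  conv_lhs => rw [← List.map_get_finRange B.toList]
  rw [List.filter_map, List.length_map]
  rw [Finset.card, Finset.filter_val, Fin.univ_def]
  simp only [Multiset.filter_coe, Multiset.coe_card]
  rfl

lemma design_count {V : Type} [Fintype V] [DecidableEq V] (B : Multiset (Finset V))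
    (t v k lam : ℕ) (hdes : IsTDesign B t v k lam) (htk : t ≤ k) (s : ℕ) (hst : s ≤ t)
    (T : Finset V) (hT : T.card = s) :
    (B.filter fun blk => T ⊆ blk).card * Nat.choose (k - s) (t - s)
      = lam * Nat.choose (v - s) (t - s) := by
  obtain ⟨hv, hk, hl⟩ := hdes
  set n := B.toList.length with hn
  set b : Fin n → Finset V := fun i => B.toList.get i with hbdef
  have hb : ∀ i, b i ∈ B := by
    intro i
    rw [← Multiset.coe_toList B]
    exact List.get_mem _ _
  set ST : Finset (Finset V) := (Finset.univ.powersetCard t).filter (fun T' => T ⊆ T') with hST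
  have key : ∀ i : Fin n, (ST.filter fun T' => T' ⊆ b i)
      = ((b i).powersetCard t).filter (fun T' => T ⊆ T') := by
    intro i
    ext T'
    simp only [hST, mem_filter, mem_powersetCard, subset_univ, true_and]
    tauto
  have e1 : ∑ i : Fin n, ∑ T' ∈ ST, (if T' ⊆ b i then 1 else 0)
      = (B.filter fun blk => T ⊆ blk).card * Nat.choose (k - s) (t - s) := by
    rw [multiset_filter_card_eq_fin, Finset.card_filter, Finset.sum_mul]
    refine Finset.sum_congr rfl fun i _ => ?_
    rw [← Finset.card_filter, key i]
    by_cases hTi : T ⊆ b i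
    · rw [card_filter_superset _ _ _ hTi (hT ▸ hst), hk _ (hb i), hT, if_pos hTi, one_mul]
    · rw [if_neg hTi, zero_mul, Finset.card_eq_zero]
      ext T'
      simp only [mem_filter, mem_powersetCard, notMem_empty, iff_false, not_and]
      intro h1 h2
      exact hTi (h2.trans h1.1)
  have e2 : ∑ i : Fin n, ∑ T' ∈ ST, (if T' ⊆ b i then 1 else 0)
      = lam * Nat.choose (v - s) (t - s) := by
    rw [Finset.sum_comm]
    have hcST : ST.card = Nat.choose (v - s) (t - s) := by
      have := card_filter_superset (Finset.univ : Finset V) T t (subset_univ T) (hT ▸ hst)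
      rw [card_univ, hv, hT] at this
      exact this
    calc ∑ T' ∈ ST, ∑ i : Fin n, (if T' ⊆ b i then 1 else 0)
        = ∑ T' ∈ ST, lam := by
          refine Finset.sum_congr rfl fun T' hT' => ?_
          rw [← Finset.card_filter, ← multiset_filter_card_eq_fin]
          simp only [hST, mem_filter, mem_powersetCard] at hT'
          exact hl T' hT'.1.2
      _ = lam * Nat.choose (v - s) (t - s) := by
          rw [Finset.sum_const, hcST, smul_eq_mul, mul_comm]
  rw [← e1, e2]

lemma design_count' {V : Type} [Fintype V] [DecidableEq V] (B : Multiset (Finset V))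
    (t v k lam : ℕ) (hdes : IsTDesign B t v k lam) (htk : t ≤ k) (s : ℕ) (hst : s ≤ t)
    (T : Finset V) (hT : T.card = s) :
    (B.filter fun blk => T ⊆ blk).card = designLambda lam v k t s := by
  have hd : 0 < Nat.choose (k - s) (t - s) :=
    Nat.choose_pos (Nat.sub_le_sub_right htk s)
  exact (Nat.div_eq_of_eq_mul_left hd
    ((design_count B t v k lam hdes htk s hst T hT).symm)).symm

lemma card_pairs {V : Type} [Fintype V] [DecidableEq V] {n : ℕ} (b : Fin n → Finset V)
    (m lamm v : ℕ) (hv : Fintype.card V = v)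
    (hcount : ∀ T : Finset V, T.card = m → (univ.filter fun i => T ⊆ b i).card = lamm) :
    Fintype.card {p : Finset V × Fin n // p.1.card = m ∧ p.1 ⊆ b p.2}
      = Nat.choose v m * lamm := by
  classical
  rw [Fintype.card_subtype, Finset.card_filter, Fintype.sum_prod_type]
  have h1 : ∀ D : Finset V, (∑ i : Fin n, if D.card = m ∧ D ⊆ b i then 1 else 0)
      = if D.card = m then lamm else 0 := by
    intro D
    by_cases hD : D.card = m
    · rw [if_pos hD, ← hcount D hD, Finset.card_filter]
      exact Finset.sum_congr rfl fun i _ => by simp [hD]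
    · simp [hD]
  rw [Finset.sum_congr rfl fun D _ => h1 D, ← Finset.sum_filter, Finset.sum_const]
  have h2 : (univ.filter fun D : Finset V => D.card = m) = Finset.univ.powersetCard m := by
    rw [powersetCard_eq_filter, powerset_univ]
  rw [h2, card_powersetCard, card_univ, hv, smul_eq_mul]

lemma existsPDA_of_types {R C Sy : Type} [Fintype R] [Fintype C] [Fintype Sy]
    [DecidableEq Sy] {K F Q S : ℕ}
    (hF : Fintype.card R = F) (hK : Fintype.card C = K) (hS : Fintype.card Sy = S)
    (P : R → C → Option Sy)
    (h1 : ∀ c, (univ.filter fun r => P r c = none).card = Q)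
    (h2 : ∀ s, ∃ r c, P r c = some s)
    (h3 : ∀ r1 r2 c1 c2 s, (r1, c1) ≠ (r2, c2) → P r1 c1 = some s → P r2 c2 = some s →
      r1 ≠ r2 ∧ c1 ≠ c2 ∧ P r1 c2 = none ∧ P r2 c1 = none) :
    ExistsPDA K F Q S := by
  classical
  let e : Fin F ≃ R := (Fintype.equivFinOfCardEq hF).symm
  let f : Fin K ≃ C := (Fintype.equivFinOfCardEq hK).symm
  let g : Sy ≃ Fin S := Fintype.equivFinOfCardEq hS
  refine ⟨fun j c => (P (e j) (f c)).map g, ?_, ?_, ?_⟩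
  · intro c
    rw [← h1 (f c)]
    apply Finset.card_bij (fun j _ => e j)
    · intro j hj
      simp only [mem_filter, mem_univ, true_and, Option.map_eq_none_iff] at hj ⊢
      exact hj
    · intro j1 h1' j2 h2' hee
      exact e.injective hee
    · intro r hr
      refine ⟨e.symm r, ?_, by simp⟩
      simp only [mem_filter, mem_univ, true_and, Option.map_eq_none_iff, Equiv.apply_symm_apply] at hr ⊢
      exact hr
  · intro s
    obtain ⟨r, c, hrc⟩ := h2 (g.symm s)
    exact ⟨e.symm r, f.symm c, by simp [hrc]⟩
  · intro j1 j2 c1 c2 s hne ha hb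
    rw [Option.map_eq_some_iff] at ha hb
    obtain ⟨s1, hs1, hs1'⟩ := ha
    obtain ⟨s2, hs2, hs2'⟩ := hb
    have hs1e : s1 = g.symm s := by rw [← hs1']; simp
    have hs2e : s2 = g.symm s := by rw [← hs2']; simp
    subst hs1e
    rw [hs2e] at hs2
    have hne' : (e j1, f c1) ≠ (e j2, f c2) := by
      intro h
      apply hne
      rw [Prod.ext_iff] at h ⊢
      exact ⟨e.injective h.1, f.injective h.2⟩
    obtain ⟨hr, hc, hn1, hn2⟩ := h3 _ _ _ _ _ hne' hs1 hs2
    exact ⟨fun h => hr (by rw [h]), fun h => hc (by rw [h]),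
      by simp [hn1], by simp [hn2]⟩

def pdaMap {V : Type} [DecidableEq V] {n : ℕ} (b : Fin n → Finset V) (t0 t1 t2 : ℕ)
    (hsum : t0 = t1 + t2)
    (r : {p : Finset V × Fin n // p.1.card = t0 ∧ p.1 ⊆ b p.2})
    (c : {p : Finset V × Fin n // p.1.card = t1 ∧ p.1 ⊆ b p.2}) :
    Option {p : Finset V × Fin n // p.1.card = t2 ∧ p.1 ⊆ b p.2} :=
  if h : r.1.2 = c.1.2 ∧ c.1.1 ⊆ r.1.1 then
    some ⟨(r.1.1 \ c.1.1, r.1.2), by rw [card_sdiff_of_subset h.2, r.2.1, c.2.1]; omega,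
      sdiff_subset.trans r.2.2⟩
  else none

lemma pdaMap_eq_none_iff {V : Type} [DecidableEq V] {n : ℕ} {b : Fin n → Finset V}
    {t0 t1 t2 : ℕ} {hsum : t0 = t1 + t2} {r} {c} :
    pdaMap b t0 t1 t2 hsum r c = none ↔ ¬ (r.1.2 = c.1.2 ∧ c.1.1 ⊆ r.1.1) := by
  rw [pdaMap]
  split_ifs with h <;> simp [h]

lemma pdaMap_eq_some_iff {V : Type} [DecidableEq V] {n : ℕ} {b : Fin n → Finset V}
    {t0 t1 t2 : ℕ} {hsum : t0 = t1 + t2} {r} {c} {s} :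
    pdaMap b t0 t1 t2 hsum r c = some s ↔
      (r.1.2 = c.1.2 ∧ c.1.1 ⊆ r.1.1) ∧ s.1.1 = r.1.1 \ c.1.1 ∧ s.1.2 = r.1.2 := by
  rw [pdaMap]
  split_ifs with h
  · rw [Option.some_inj]
    constructor
    · rintro rfl
      exact ⟨h, rfl, rfl⟩
    · rintro ⟨-, h1, h2⟩
      apply Subtype.ext
      rw [Prod.ext_iff]
      exact ⟨h1.symm, h2.symm⟩
  · simp only [false_iff, not_and]
    intro hc
    exact absurd hc h

lemma pda_construction {V : Type} [Fintype V] [DecidableEq V] {n : ℕ} (b : Fin n → Finset V)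
    (k t0 t1 t2 : ℕ) (hkcard : ∀ i, (b i).card = k)
    (hsum : t0 = t1 + t2) (ht0k : t0 ≤ k)
    (K F Q S : ℕ)
    (hF : Fintype.card {p : Finset V × Fin n // p.1.card = t0 ∧ p.1 ⊆ b p.2} = F)
    (hK : Fintype.card {p : Finset V × Fin n // p.1.card = t1 ∧ p.1 ⊆ b p.2} = K)
    (hS : Fintype.card {p : Finset V × Fin n // p.1.card = t2 ∧ p.1 ⊆ b p.2} = S)
    (hQ : Q = F - Nat.choose (k - t1) t2) :
    ExistsPDA K F Q S := by
  classical
  refine existsPDA_of_types hF hK hS (pdaMap b t0 t1 t2 hsum) ?_ ?_ ?_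
  · -- C1
    intro c
    obtain ⟨⟨E, j⟩, hE1, hE2⟩ := c
    simp only at hE1 hE2
    have hnot : (univ.filter fun r : {p : Finset V × Fin n // p.1.card = t0 ∧ p.1 ⊆ b p.2} =>
        ¬ (pdaMap b t0 t1 t2 hsum r ⟨(E, j), hE1, hE2⟩ = none)).card
        = Nat.choose (k - t1) t2 := by
      have heq : (k - t1).choose t2 = ((b j).card - E.card).choose (t0 - E.card) := by
        rw [hkcard j, hE1]
        congr 1
        omega
      rw [heq, ← card_filter_superset (b j) E t0 hE2 (by rw [hE1]; omega)]
      apply Finset.card_bij (fun r _ => r.1.1)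
      · rintro ⟨⟨D, i⟩, hD1, hD2⟩ hr
        simp only [mem_filter, mem_univ, true_and, pdaMap_eq_none_iff, not_not] at hr
        obtain ⟨hij, hED⟩ := hr
        simp only at hij hED hD1 hD2
        subst hij
        simp only [mem_filter, mem_powersetCard]
        exact ⟨⟨hD2, hD1⟩, hED⟩
      · rintro ⟨⟨D1, i1⟩, h11, h12⟩ ha1 ⟨⟨D2, i2⟩, h21, h22⟩ ha2 heq2
        simp only [mem_filter, mem_univ, true_and, pdaMap_eq_none_iff, not_not] at ha1 ha2
        simp only at heq2
        subst heq2
        obtain ⟨hi1, -⟩ := ha1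
        obtain ⟨hi2, -⟩ := ha2
        exact Subtype.ext (Prod.ext rfl (hi1.trans hi2.symm))
      · intro D hD
        simp only [mem_filter, mem_powersetCard] at hD
        refine ⟨⟨(D, j), hD.1.2, hD.1.1⟩, ?_, rfl⟩
        simp only [mem_filter, mem_univ, true_and, pdaMap_eq_none_iff, not_not]
        first
        | exact ⟨rfl, hD.2⟩
        | exact hD.2
    have hsplit := Finset.card_filter_add_card_filter_not
      (s := (univ : Finset {p : Finset V × Fin n // p.1.card = t0 ∧ p.1 ⊆ b p.2}))
      (p := fun r => pdaMap b t0 t1 t2 hsum r ⟨(E, j), hE1, hE2⟩ = none)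
    rw [card_univ, hF, hnot] at hsplit
    omega
  · -- C2
    rintro ⟨⟨G, i⟩, hG1, hG2⟩
    simp only at hG1 hG2
    have hcard : t1 ≤ ((b i) \ G).card := by
      rw [card_sdiff_of_subset hG2, hkcard i, hG1]; omega
    obtain ⟨E, hEsub, hEcard⟩ := Finset.exists_subset_card_eq hcard
    have hdisj : Disjoint E G := sdiff_disjoint.mono_left hEsub
    have hEG1 : (E ∪ G).card = t0 := by
      rw [card_union_of_disjoint hdisj, hEcard, hG1]; omega
    have hEG2 : E ∪ G ⊆ b i := union_subset (hEsub.trans sdiff_subset) hG2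
    refine ⟨⟨(E ∪ G, i), hEG1, hEG2⟩, ⟨(E, i), hEcard, hEsub.trans sdiff_subset⟩, ?_⟩
    rw [pdaMap_eq_some_iff]
    exact ⟨⟨rfl, subset_union_left⟩, (union_sdiff_cancel_left hdisj).symm, rfl⟩
  · -- C3
    rintro ⟨⟨D1, i1⟩, hD11, hD12⟩ ⟨⟨D2, i2⟩, hD21, hD22⟩ ⟨⟨E1, j1⟩, hE11, hE12⟩
      ⟨⟨E2, j2⟩, hE21, hE22⟩ ⟨⟨G, ig⟩, hG1, hG2⟩ hne ha hb'
    rw [pdaMap_eq_some_iff] at ha hb'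
    obtain ⟨⟨hij1, hE1D1⟩, hGa, hia⟩ := ha
    obtain ⟨⟨hij2, hE2D2⟩, hGb, hib⟩ := hb'
    simp only at hij1 hij2 hE1D1 hE2D2 hGa hia hGb hib hD11 hD21 hE11 hE21 hG1
    have hi12 : i1 = i2 := by rw [← hia, ← hib]
    have hD1eq : D1 = E1 ∪ G := by
      rw [hGa, union_sdiff_of_subset hE1D1]
    have hD2eq : D2 = E2 ∪ G := by
      rw [hGb, union_sdiff_of_subset hE2D2]
    have hdj1 : Disjoint E1 G := by rw [hGa]; exact disjoint_sdiff
    have hdj2 : Disjoint E2 G := by rw [hGb]; exact disjoint_sdiff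
    have hE1eq : E1 = D1 \ G := by
      rw [hD1eq, union_sdiff_cancel_right hdj1]
    have hE2eq : E2 = D2 \ G := by
      rw [hD2eq, union_sdiff_cancel_right hdj2]
    have hEne : E1 ≠ E2 := by
      intro h
      apply hne
      have hD : D1 = D2 := by rw [hD1eq, hD2eq, h]
      have hj12 : j1 = j2 := by rw [← hij1, ← hij2, hi12]
      simp only [Prod.mk.injEq, Subtype.mk.injEq]
      exact ⟨⟨hD, hi12⟩, h, hj12⟩
    have hDne : D1 ≠ D2 := by
      intro h
      exact hEne (by rw [hE1eq, hE2eq, h])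
    refine ⟨?_, ?_, ?_, ?_⟩
    · intro h
      rw [Subtype.ext_iff, Prod.ext_iff] at h
      exact hDne h.1
    · intro h
      rw [Subtype.ext_iff, Prod.ext_iff] at h
      exact hEne h.1
    · rw [pdaMap_eq_none_iff]
      rintro ⟨-, hsub⟩
      simp only at hsub
      apply hEne
      have h2 : E2 ⊆ (E1 ∪ G) \ G := subset_sdiff.mpr ⟨hD1eq ▸ hsub, hdj2⟩
      rw [union_sdiff_cancel_right hdj1] at h2
      exact (Finset.eq_of_subset_of_card_le h2 (by rw [hE11, hE21])).symm
    · rw [pdaMap_eq_none_iff]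
      rintro ⟨-, hsub⟩
      simp only at hsub
      apply hEne
      have h2 : E1 ⊆ (E2 ∪ G) \ G := subset_sdiff.mpr ⟨hD2eq ▸ hsub, hdj1⟩
      rw [union_sdiff_cancel_right hdj2] at h2
      exact Finset.eq_of_subset_of_card_le h2 (by rw [hE11, hE21])

/-- `t`-design construction, parameter set 2: a `t`-`(v,k,λ)` design with `λ ≥ 1`
and positive `t0, t1, t2` with `t0 = t1 + t2 ≤ t` yields a PDA with
`K = C(v,t1)·λ_{t1}`, `F = C(v,t0)·λ_{t0}`, `Q = C(v,t0)·λ_{t0} - C(k-t1,t2)`,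
`S = C(v,t2)·λ_{t2}`. -/
theorem exists_pda_of_design_two {V : Type} [Fintype V] [DecidableEq V]
    (B : Multiset (Finset V)) (t v k lam t0 t1 t2 : ℕ)
    (ht : 0 < t) (htk : t ≤ k) (hkv : k < v) (hlam : 1 ≤ lam)
    (hdes : IsTDesign B t v k lam)
    (ht0 : 0 < t0) (ht1 : 0 < t1) (ht2 : 0 < t2)
    (hsum : t0 = t1 + t2) (ht0t : t0 ≤ t) :
    ExistsPDA (Nat.choose v t1 * designLambda lam v k t t1)
      (Nat.choose v t0 * designLambda lam v k t t0)
      (Nat.choose v t0 * designLambda lam v k t t0 - Nat.choose (k - t1) t2)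
      (Nat.choose v t2 * designLambda lam v k t t2) := by
  classical
  set n := B.toList.length with hn
  set b : Fin n → Finset V := fun i => B.toList.get i with hb
  have hmem : ∀ i, b i ∈ B := by
    intro i
    rw [← Multiset.coe_toList B]
    exact List.get_mem _ _
  have hkcard : ∀ i, (b i).card = k := fun i => hdes.2.1 _ (hmem i)
  have hcount : ∀ m, m ≤ t → ∀ T : Finset V, T.card = m →
      (univ.filter fun i => T ⊆ b i).card = designLambda lam v k t m := by
    intro m hm T hT
    rw [← multiset_filter_card_eq_fin]
    exact design_count' B t v k lam hdes htk m hm T hT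
  exact pda_construction b k t0 t1 t2 hkcard hsum (ht0t.trans htk) _ _ _ _
    (card_pairs b t0 _ v hdes.1 (fun T hT => hcount t0 ht0t T hT))
    (card_pairs b t1 _ v hdes.1 (fun T hT => hcount t1 (by omega) T hT))
    (card_pairs b t2 _ v hdes.1 (fun T hT => hcount t2 (by omega) T hT))
    rfl
end
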